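/- arXiv:1712.00208 — 2 statements merged into one kernel-verified Lean document; each statement's English description precedes it below -/
import Mathlib

section
/- Let n ≥ 2m be integers with m ≥ 1, and let G be a connected simple graph on n vertices having a Laplacian eigenvalue α with multiplicity n − m. Then α is an integer. -/
open Polynomial

private lemma aux_minpoly_pow_dvd (α : ℝ) (hint : IsIntegral ℚ α) :
    ∀ (k : ℕ) (f : Polynomial ℚ),
      (X - C α) ^ k ∣ f.map (algebraMap ℚ ℝ) → (minpoly ℚ α) ^ k ∣ f := by
  intro k
  induction k with
  | zero => intro f _; simp
  | succ k ih =>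
    intro f hdvd
    rcases eq_or_ne f 0 with rfl | hf
    · exact dvd_zero _
    have hXdvd : (X - C α) ∣ f.map (algebraMap ℚ ℝ) :=
      (dvd_pow_self _ (Nat.succ_ne_zero k)).trans hdvd
    have hroot : (f.map (algebraMap ℚ ℝ)).IsRoot α := dvd_iff_isRoot.mp hXdvd
    have haev : Polynomial.aeval α f = 0 := by
      rw [aeval_def, ← eval_map]; exact hroot
    obtain ⟨g, rfl⟩ := minpoly.dvd ℚ α haev
    set μ := minpoly ℚ α with hμ
    have hμroot : (μ.map (algebraMap ℚ ℝ)).IsRoot α := by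
      have := minpoly.aeval ℚ α
      rwa [aeval_def, ← eval_map] at this
    obtain ⟨s, hs⟩ := dvd_iff_isRoot.mpr hμroot
    have hsq : Squarefree (μ.map (algebraMap ℚ ℝ)) :=
      ((minpoly.irreducible hint).separable.map).squarefree
    have hsα : ¬ (X - C α) ∣ s := by
      intro hdvd'
      obtain ⟨t, rfl⟩ := hdvd'
      have : (X - C α) * (X - C α) ∣ μ.map (algebraMap ℚ ℝ) :=
        ⟨t, by rw [hs]; ring⟩
      exact Polynomial.not_isUnit_X_sub_C α (hsq _ this)
    have hXne : (X - C α) ≠ (0 : Polynomial ℝ) := Polynomial.X_sub_C_ne_zero α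
    have hcancel : (X - C α) ^ k ∣ s * g.map (algebraMap ℚ ℝ) := by
      have h1 : (X - C α) * (X - C α) ^ k ∣
          (X - C α) * (s * g.map (algebraMap ℚ ℝ)) := by
        have h2 : (μ * g).map (algebraMap ℚ ℝ)
            = (X - C α) * (s * g.map (algebraMap ℚ ℝ)) := by
          rw [Polynomial.map_mul, hs]; ring
        rw [← h2, ← pow_succ']
        exact hdvd
      exact (mul_dvd_mul_iff_left hXne).mp h1
    have hgdvd : (X - C α) ^ k ∣ g.map (algebraMap ℚ ℝ) :=
      (Polynomial.prime_X_sub_C α).pow_dvd_of_dvd_mul_left k hsα hcancel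
    rw [pow_succ']
    exact mul_dvd_mul_left μ (ih g hgdvd)

/-- Let `n ≥ 2m` be integers with `m ≥ 1`, and let `G` be a connected simple
graph on `n` vertices having a Laplacian eigenvalue `α` with multiplicity `n − m`.
Then `α` is an integer. -/
theorem laplacian_eigenvalue_high_multiplicity_integral
    (m n : ℕ) (hm : 1 ≤ m) (hn : 2 * m ≤ n)
    (G : SimpleGraph (Fin n)) [DecidableRel G.Adj] (hconn : G.Connected)
    (α : ℝ) (hα : ((G.lapMatrix ℝ).charpoly.rootMultiplicity α) = n - m) :
    ∃ k : ℤ, α = (k : ℝ) := by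
  have hn2 : 2 ≤ n := by omega
  have hQR : (G.lapMatrix ℚ).map ⇑(algebraMap ℚ ℝ) = G.lapMatrix ℝ := by
    ext i j
    simp [SimpleGraph.lapMatrix, SimpleGraph.degMatrix, Matrix.map_apply,
      Matrix.sub_apply, Matrix.diagonal_apply]
    all_goals split_ifs <;> norm_num
  have hZR : (G.lapMatrix ℤ).map ⇑(algebraMap ℤ ℝ) = G.lapMatrix ℝ := by
    ext i j
    simp [SimpleGraph.lapMatrix, SimpleGraph.degMatrix, Matrix.map_apply,
      Matrix.sub_apply, Matrix.diagonal_apply]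
    all_goals split_ifs <;> norm_num
  set pQ := (G.lapMatrix ℚ).charpoly with hpQdef
  set pZ := (G.lapMatrix ℤ).charpoly with hpZdef
  have hq : (G.lapMatrix ℝ).charpoly = pQ.map (algebraMap ℚ ℝ) := by
    rw [← hQR, Matrix.charpoly_map]
  have hqZ : (G.lapMatrix ℝ).charpoly = pZ.map (algebraMap ℤ ℝ) := by
    rw [← hZR, Matrix.charpoly_map]
  have hmono : pQ.Monic := Matrix.charpoly_monic _
  have hdeg : pQ.natDegree = n := by
    rw [hpQdef, Matrix.charpoly_natDegree_eq_dim, Fintype.card_fin]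
  have hqne : (G.lapMatrix ℝ).charpoly ≠ 0 := (Matrix.charpoly_monic _).ne_zero
  have hroot : ((G.lapMatrix ℝ).charpoly).IsRoot α := by
    rw [← Polynomial.rootMultiplicity_pos hqne, hα]
    omega
  have hintZ : IsIntegral ℤ α := by
    refine ⟨pZ, Matrix.charpoly_monic _, ?_⟩
    rw [← eval_map, ← hqZ]
    exact hroot
  have hintQ : IsIntegral ℚ α := by
    refine ⟨pQ, hmono, ?_⟩
    rw [← eval_map, ← hq]
    exact hroot
  set μ := minpoly ℚ α with hμdef
  have hμdvd : μ ^ (n - m) ∣ pQ := by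
    apply aux_minpoly_pow_dvd α hintQ
    rw [← hq, ← hα]
    exact Polynomial.pow_rootMultiplicity_dvd _ α
  have hdegle : (n - m) * μ.natDegree ≤ n := by
    have h := Polynomial.natDegree_le_of_dvd hμdvd hmono.ne_zero
    rwa [Polynomial.natDegree_pow, hdeg] at h
  have hd1 : μ.natDegree = 1 := by
    by_contra hne1
    have hdpos : 0 < μ.natDegree := minpoly.natDegree_pos hintQ
    have hd2 : 2 ≤ μ.natDegree := by omega
    have h2nm : 2 * (n - m) ≤ (n - m) * μ.natDegree := by
      calc 2 * (n - m) = (n - m) * 2 := by ring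
        _ ≤ (n - m) * μ.natDegree := Nat.mul_le_mul_left _ hd2
    -- so n = 2m and  (n-m) * natDegree μ = n
    obtain ⟨c, hc⟩ := hμdvd
    have hμne : μ ≠ 0 := minpoly.ne_zero hintQ
    have hcne : c ≠ 0 := by
      intro h; rw [h, mul_zero] at hc; exact hmono.ne_zero hc
    have hdegsum : pQ.natDegree = (n - m) * μ.natDegree + c.natDegree := by
      rw [hc, Polynomial.natDegree_mul (pow_ne_zero _ hμne) hcne,
        Polynomial.natDegree_pow]
    rw [hdeg] at hdegsum
    have hcdeg : c.natDegree = 0 := by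
      generalize (n - m) * μ.natDegree = K at hdegsum h2nm
      omega
    have hcmono : c.Monic := ((minpoly.monic hintQ).pow _).of_mul_monic_left (hc ▸ hmono)
    have hc1 : c = 1 := hcmono.natDegree_eq_zero.mp hcdeg
    -- determinant of the Laplacian is zero
    have hvne : (fun _ : Fin n => (1 : ℚ)) ≠ 0 := by
      intro h
      have := congrFun h ⟨0, by omega⟩
      simp at this
    have hdet : (G.lapMatrix ℚ).det = 0 :=
      Matrix.exists_mulVec_eq_zero_iff.mp
        ⟨fun _ => 1, hvne, G.lapMatrix_mulVec_const_eq_zero⟩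
    have h0 : pQ.eval 0 = 0 := by
      have h := Matrix.det_eq_sign_charpoly_coeff (G.lapMatrix ℚ)
      rw [hdet, ← hpQdef] at h
      have hcoeff : pQ.coeff 0 = 0 := by
        rcases mul_eq_zero.mp h.symm with h' | h'
        · exact absurd h' (by positivity)
        · exact h'
      rwa [Polynomial.coeff_zero_eq_eval_zero] at hcoeff
    have hμ0 : μ.eval 0 = 0 := by
      rw [hc, hc1, mul_one, Polynomial.eval_pow] at h0
      exact pow_eq_zero_iff (by omega) |>.mp h0
    -- an irreducible polynomial with a root has degree 1
    have hXdvd : (X - C (0 : ℚ)) ∣ μ := dvd_iff_isRoot.mpr hμ0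
    obtain ⟨t, ht⟩ := hXdvd
    rcases (minpoly.irreducible hintQ).isUnit_or_isUnit ht with hu | hu
    · exact Polynomial.not_isUnit_X_sub_C _ hu
    · have htd : t.natDegree = 0 := Polynomial.natDegree_eq_zero_of_isUnit hu
      have htne : t ≠ 0 := by rintro rfl; rw [mul_zero] at ht; exact hμne ht
      have : μ.natDegree = 1 := by
        rw [ht, Polynomial.natDegree_mul (Polynomial.X_sub_C_ne_zero 0) htne,
          Polynomial.natDegree_X_sub_C, htd]
      exact hne1 this
  obtain ⟨r, hr⟩ := minpoly.natDegree_eq_one_iff.mp hd1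
  have hrint : IsIntegral ℤ r := by
    have h := hintZ
    rw [← hr] at h
    exact (isIntegral_algebraMap_iff (algebraMap ℚ ℝ).injective).mp h
  obtain ⟨k, hk⟩ := IsIntegrallyClosed.isIntegral_iff.mp hrint
  refine ⟨k, ?_⟩
  rw [← hr, ← hk]
  push_cast
  rfl
end

section
/- Let n ≥ 6 and let G be a connected simple graph on n vertices having a Laplacian eigenvalue of multiplicity n − 3. Then G contains no induced subgraph isomorphic to the cycle C₅ on five vertices. -/
/-- The cycle `C₅` on five vertices `v₁, v₂, v₃, v₄, u`, with edges
`v₁v₂, v₂v₃, v₃v₄, uv₁, uv₄`. -/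
def C5 : SimpleGraph (Fin 5) :=
  SimpleGraph.fromEdgeSet {s(0, 1), s(1, 2), s(2, 3), s(4, 0), s(4, 3)}

/-!
Let `α` be the eigenvalue of multiplicity `n - 3`. As `G` is connected, `0` is simple, so `α ≠ 0`
and every `α`-eigenvector sums to zero. Add a sixth vertex `w` to an induced `C₅` with vertices
`v₀, …, v₄` in cyclic order; the `α`-eigenvectors vanishing off these six vertices form a space of
dimension at least `(n - 3) + 6 - n = 3`. On the six vertices they satisfy `A y = (deg - α) y` for
the induced adjacency matrix `A`, and walking along the path `v₀ v₁ v₂ v₃ v₄` shows that `y` is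
determined by `y v₀`, `y v₁`, `y w`, which may therefore be prescribed freely. The unit choices at
`v₀` and `v₁` force `deg vᵢ - α = a` for `i = 1, 2, 3` with `a² + a = 1`, so `a` is irrational; the
remaining equations are then linear relations in `a` with integer coefficients coming from the
adjacencies to `w`, and these are inconsistent.
-/

open Matrix Module

theorem Matrix.IsHermitian.finrank_eigenspace_toLin' {𝕜 n : Type*} [RCLike 𝕜] [Fintype n]
    [DecidableEq n] {A : Matrix n n 𝕜} (hA : A.IsHermitian) (μ : 𝕜) :
    finrank 𝕜 (End.eigenspace (toLin' A) μ) = A.charpoly.rootMultiplicity μ := by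
  have hss : End.IsFinitelySemisimple (toLin' A) := by
    rw [End.isFinitelySemisimple_iff_isSemisimple,
      LinearEquiv.isSemisimple_iff (toLin' A) (toEuclideanLin A)
        (WithLp.linearEquiv 2 𝕜 (n → 𝕜)).symm rfl]
    exact End.isFinitelySemisimple_iff_isSemisimple.mp
      (isSymmetric_toEuclideanLin_iff.mpr hA).isFinitelySemisimple
  rw [← hss.maxGenEigenspace_eq_eigenspace, LinearMap.finrank_maxGenEigenspace_eq, charpoly_toLin']

theorem Submodule.finrank_add_le_finrank_comap_add {K V V' : Type*} [Field K] [AddCommGroup V]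
    [Module K V] [AddCommGroup V'] [Module K V'] [FiniteDimensional K V] [FiniteDimensional K V']
    (E : V →ₗ[K] V') (W : Submodule K V') :
    finrank K V + finrank K W ≤ finrank K (W.comap E) + finrank K V' := by
  have hker : W.comap E = LinearMap.ker (W.mkQ ∘ₗ E) := by
    rw [LinearMap.ker_comp, Submodule.ker_mkQ]
  have hrange := (LinearMap.range (W.mkQ ∘ₗ E)).finrank_le
  rw [hker]
  have := LinearMap.finrank_range_add_finrank_ker (W.mkQ ∘ₗ E)
  have := W.finrank_quotient_add_finrank
  omega

theorem Function.Injective.sum_extend_zero {ι V M : Type*} [Fintype ι] [Fintype V]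
    [AddCommMonoid M] {g : ι → V} (hg : g.Injective) (y : ι → M) :
    ∑ v, Function.extend g y 0 v = ∑ i, y i :=
  (Fintype.sum_of_injective g hg y _ (fun v hv => Function.extend_apply' y (0 : V → M) v hv)
    fun i => (hg.extend_apply y 0 i).symm).symm

theorem irrational_of_sq_add_self_eq_one {b : ℝ} (hb : b ^ 2 + b = 1) : Irrational b := by
  have h5 : (2 * b + 1) ^ 2 = ((5 : ℤ) : ℝ) := by push_cast; linear_combination 4 * hb
  have hnotint : ¬∃ m : ℤ, 2 * b + 1 = m := by
    rintro ⟨m, hm⟩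
    rw [hm] at h5
    have hm5 : m ^ 2 = 5 := by exact_mod_cast h5
    have : m ≤ 2 := by nlinarith
    have : -2 ≤ m := by nlinarith
    interval_cases m <;> omega
  have h : Irrational ((2 : ℕ) * b + (1 : ℕ)) := by
    exact_mod_cast irrational_nrt_of_notint_nrt 2 5 h5 hnotint two_pos
  exact (h.of_add_natCast 1).of_natCast_mul 2

theorem Irrational.eq_zero_of_intCast_add_intCast_mul_eq_zero {b : ℝ} (hb : Irrational b)
    {p q : ℤ} (h : (p : ℝ) + q * b = 0) : p = 0 ∧ q = 0 := by
  obtain rfl : q = 0 := by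
    by_contra hq
    exact ((hb.intCast_mul hq).intCast_add p).ne_zero h
  exact ⟨by simpa using h, rfl⟩

theorem C5_adj_iff (i j : Fin 5) : C5.Adj i j ↔ j = i + 1 ∨ i = j + 1 := by
  simp only [C5, SimpleGraph.fromEdgeSet_adj, Set.mem_insert_iff, Set.mem_singleton_iff,
    Sym2.eq_iff]
  revert i j
  decide

instance : DecidableRel C5.Adj := fun i j => decidable_of_iff _ (C5_adj_iff i j).symm

theorem C5_adjMatrix_mulVec_apply {R : Type*} [NonAssocSemiring R] (z : Fin 5 → R) (i : Fin 5) :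
    (C5.adjMatrix R *ᵥ z) i = z (i - 1) + z (i + 1) := by
  fin_cases i <;> simp [mulVec, dotProduct, Fin.sum_univ_five, SimpleGraph.adjMatrix_apply,
    C5_adj_iff] <;> exact add_comm _ _

namespace SimpleGraph

/-- For `H` induced by `G` on a vertex set `S` and `a = deg_G - α` on `S`, these are the equations
that a zero-sum `α`-eigenvector of `L(G)` vanishing off `S` satisfies on `S`. -/
def IsLocalSolution {ι : Type*} [Fintype ι] (H : SimpleGraph ι) [DecidableRel H.Adj]
    (a y : ι → ℝ) : Prop :=
  H.adjMatrix ℝ *ᵥ y = a * y ∧ ∑ i, y i = 0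

variable {V : Type*} [Fintype V] [DecidableEq V] (G : SimpleGraph V) [DecidableRel G.Adj]

theorem sum_lapMatrix_mulVec {R : Type*} [CommRing R] (x : V → R) :
    ∑ v, (G.lapMatrix R *ᵥ x) v = 0 := by
  calc ∑ v, (G.lapMatrix R *ᵥ x) v = (fun _ => 1) ⬝ᵥ (G.lapMatrix R *ᵥ x) := by
        simp [dotProduct]
    _ = (G.lapMatrix R *ᵥ fun _ => 1) ⬝ᵥ x := by
        rw [dotProduct_mulVec, ← vecMul_transpose, (G.isSymm_lapMatrix (R := R)).eq]
    _ = 0 := by rw [lapMatrix_mulVec_const_eq_zero, zero_dotProduct]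

theorem sum_eq_zero_of_lapMatrix_mulVec_eq_smul {K : Type*} [Field K] {x : V → K} {α : K}
    (hα : α ≠ 0) (hx : G.lapMatrix K *ᵥ x = α • x) : ∑ v, x v = 0 := by
  have h := G.sum_lapMatrix_mulVec x
  rw [hx] at h
  simpa [← Finset.mul_sum, hα] using h

theorem rootMultiplicity_zero_charpoly_lapMatrix (hG : G.Connected) :
    (G.lapMatrix ℝ).charpoly.rootMultiplicity 0 = 1 := by
  have := hG.preconnected.subsingleton_connectedComponent
  rw [← (G.isHermitian_lapMatrix ℝ).finrank_eigenspace_toLin', End.eigenspace_zero,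
    ← card_connectedComponent_eq_finrank_ker_toLin'_lapMatrix]
  exact Fintype.card_eq_one_iff.mpr
    ⟨G.connectedComponentMk hG.nonempty.some, fun _ => Subsingleton.elim _ _⟩

variable {ι : Type*} [Fintype ι] {g : ι → V}

theorem lapMatrix_mulVec_extend_apply {R : Type*} [Ring R] (hg : g.Injective) (y : ι → R)
    (i : ι) :
    (G.lapMatrix R *ᵥ Function.extend g y 0) (g i) =
      G.degree (g i) * y i - ((G.comap g).adjMatrix R *ᵥ y) i := by
  rw [lapMatrix_mulVec_apply, hg.extend_apply, neighborFinset_eq_filter, Finset.sum_filter]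
  congr 1
  refine (Fintype.sum_of_injective g hg _ _ (fun v hv => ?_) fun j => ?_).symm
  · simp [Function.extend_apply' _ _ _ hv]
  · simp [adjMatrix_apply, hg.extend_apply]

theorem isLocalSolution_comap (hg : g.Injective) {α : ℝ} (hα : α ≠ 0) {y : ι → ℝ}
    (hy : G.lapMatrix ℝ *ᵥ Function.extend g y 0 = α • Function.extend g y 0) :
    (G.comap g).IsLocalSolution (fun i => G.degree (g i) - α) y := by
  refine ⟨funext fun i => ?_, ?_⟩
  · have h := congrFun hy (g i)
    rw [G.lapMatrix_mulVec_extend_apply hg, Pi.smul_apply, hg.extend_apply, smul_eq_mul] at h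
    simp only [Pi.mul_apply]
    linarith
  · rw [← hg.sum_extend_zero]
    exact G.sum_eq_zero_of_lapMatrix_mulVec_eq_smul hα hy

end SimpleGraph

namespace SimpleGraph.IsLocalSolution

-- `some i` is the vertex `i` of the induced `C₅` and `none` the sixth vertex.
variable {H : SimpleGraph (Option (Fin 5))} [DecidableRel H.Adj] {a y : Option (Fin 5) → ℝ}

theorem cycle_row (hH : ∀ i j, H.Adj (some i) (some j) ↔ C5.Adj i j)
    (hy : H.IsLocalSolution a y) (i : Fin 5) :
    a (some i) * y (some i) =
      y (some (i - 1)) + y (some (i + 1)) + H.adjMatrix ℝ (some i) none * y none := by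
  have hC5 : ∀ j, H.adjMatrix ℝ (some i) (some j) = C5.adjMatrix ℝ i j := by
    simp [adjMatrix_apply, hH]
  have hcycle := C5_adjMatrix_mulVec_apply (fun j => y (some j)) i
  have hrow := congrFun hy.1 (some i)
  simp only [mulVec, dotProduct, Fintype.sum_option, Pi.mul_apply, hC5] at hcycle hrow
  linarith

theorem apex_row (hy : H.IsLocalSolution a y) :
    a none * y none = ∑ i, H.adjMatrix ℝ (some i) none * y (some i) := by
  rw [← Pi.mul_apply a y, ← hy.1]
  simp [mulVec, dotProduct, Fintype.sum_option, adjMatrix_apply, adj_comm]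

theorem sum_eq (hy : H.IsLocalSolution a y) : y none + ∑ i, y (some i) = 0 := by
  rw [← Fintype.sum_option]; exact hy.2

variable (hH : ∀ i j, H.Adj (some i) (some j) ↔ C5.Adj i j)
include hH

theorem eq_zero_of_apply_eq_zero (hy : H.IsLocalSolution a y) (h0 : y (some 0) = 0)
    (h1 : y (some 1) = 0) (hw : y none = 0) : y = 0 := by
  have r1 := hy.cycle_row hH 1
  have r2 := hy.cycle_row hH 2
  have r3 := hy.cycle_row hH 3
  simp only [Fin.reduceSub, Fin.reduceAdd] at r1 r2 r3
  have h2 : y (some 2) = 0 := by rw [h0, h1, hw] at r1; linarith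
  have h3 : y (some 3) = 0 := by rw [h1, h2, hw] at r2; linarith
  have h4 : y (some 4) = 0 := by rw [h2, h3, hw] at r3; linarith
  funext v
  rcases v with _ | i
  · exact hw
  · fin_cases i <;> assumption

variable {P Q : Option (Fin 5) → ℝ}

theorem cycle_weights_eq (hP : H.IsLocalSolution a P) (hP0 : P (some 0) = 1)
    (hP1 : P (some 1) = 0) (hPw : P none = 0) (hQ : H.IsLocalSolution a Q)
    (hQ0 : Q (some 0) = 0) (hQ1 : Q (some 1) = 1) (hQw : Q none = 0) :
    a (some 1) = a (some 2) ∧ a (some 3) = a (some 2) ∧ a (some 2) ^ 2 + a (some 2) = 1 := by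
  have P1 := hP.cycle_row hH 1
  have P2 := hP.cycle_row hH 2
  have P3 := hP.cycle_row hH 3
  have Ps := hP.sum_eq
  have Q0 := hQ.cycle_row hH 0
  have Q1 := hQ.cycle_row hH 1
  have Q2 := hQ.cycle_row hH 2
  have Q3 := hQ.cycle_row hH 3
  have Qs := hQ.sum_eq
  simp only [Fin.reduceSub, Fin.reduceAdd, Fin.sum_univ_five] at P1 P2 P3 Ps Q0 Q1 Q2 Q3 Qs
  simp only [hP0, hP1, hPw] at P1 P2 P3 Ps
  simp only [hQ0, hQ1, hQw] at Q0 Q1 Q2 Q3 Qs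
  have E1 : a (some 2) * (1 + a (some 3)) = 1 := by
    linear_combination -Ps - P3 - (1 + a (some 3)) * P2 - (1 + a (some 3)) * a (some 2) * P1
  have E2 : a (some 1) * (1 + a (some 2)) = 1 := by
    linear_combination Qs + (1 + a (some 2)) * Q1 + Q2 + Q0
  have E3 : a (some 1) * (1 + a (some 3)) = 1 := by
    linear_combination -(Q3 - Q0 + a (some 3) * Q2 + (a (some 3) * a (some 2) - 1) * Q1
      - a (some 3) * E2)
  have ha1 : a (some 1) = a (some 2) := by
    linear_combination a (some 2) * E3 - a (some 1) * E1
  have hb : a (some 2) ^ 2 + a (some 2) = 1 := by linear_combination E2 - (1 + a (some 2)) * ha1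
  refine ⟨ha1, ?_, hb⟩
  linear_combination (1 + a (some 2)) * E1 - (1 + a (some 2)) * hb - (a (some 3) - a (some 2)) * hb

variable {R : Option (Fin 5) → ℝ}

theorem false_of_three_solutions (hP : H.IsLocalSolution a P) (hP0 : P (some 0) = 1)
    (hP1 : P (some 1) = 0) (hPw : P none = 0) (hQ : H.IsLocalSolution a Q)
    (hQ0 : Q (some 0) = 0) (hQ1 : Q (some 1) = 1) (hQw : Q none = 0)
    (hR : H.IsLocalSolution a R) (hR0 : R (some 0) = 0) (hR1 : R (some 1) = 0)
    (hRw : R none = 1) : False := by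
  obtain ⟨ha1, ha3, hb⟩ := cycle_weights_eq hH hP hP0 hP1 hPw hQ hQ0 hQ1 hQw
  have ht : ∀ i, ∃ m : ℤ, H.adjMatrix ℝ (some i) none = m := fun i =>
    ⟨if H.Adj (some i) none then 1 else 0, by rw [adjMatrix_apply]; split_ifs <;> simp⟩
  choose t ht using ht
  have Q0 := hQ.cycle_row hH 0
  have Q1 := hQ.cycle_row hH 1
  have Q2 := hQ.cycle_row hH 2
  have Qw := hQ.apex_row
  have R0 := hR.cycle_row hH 0
  have R1 := hR.cycle_row hH 1
  have R2 := hR.cycle_row hH 2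
  have R3 := hR.cycle_row hH 3
  have Rs := hR.sum_eq
  simp only [Fin.reduceSub, Fin.reduceAdd, Fin.sum_univ_five, ht, ha1, hQ0, hQ1, hQw]
    at Q0 Q1 Q2 Qw
  simp only [Fin.reduceSub, Fin.reduceAdd, Fin.sum_univ_five, ht, ha1, ha3, hR0, hR1, hRw]
    at R0 R1 R2 R3 Rs
  set b := a (some 2)
  have e1 : ((t 1 - t 4 : ℤ) : ℝ) + ((t 2 - t 3 : ℤ) : ℝ) * b = 0 := by
    push_cast
    linear_combination -Qw + t 2 * Q1 - t 3 * (hb - Q2 - b * Q1) + t 4 * Q0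
  have e2 : ((t 0 - t 3 : ℤ) : ℝ) + ((t 1 - t 2 : ℤ) : ℝ) * b = 0 := by
    push_cast
    linear_combination t 1 * hb - (1 - b ^ 2) * R1 + b * R2 + R3 - R0
  have e3 : ((1 - t 1 - t 2 - t 3 : ℤ) : ℝ) + ((-t 2 : ℤ) : ℝ) * b = 0 := by
    push_cast
    linear_combination Rs + R1 - R (some 2) * hb + (1 + b) * R2 + R3
  have hirr := irrational_of_sq_add_self_eq_one hb
  have := hirr.eq_zero_of_intCast_add_intCast_mul_eq_zero e1
  have := hirr.eq_zero_of_intCast_add_intCast_mul_eq_zero e2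
  have := hirr.eq_zero_of_intCast_add_intCast_mul_eq_zero e3
  omega

end IsLocalSolution

theorem finrank_le_two_of_forall_isLocalSolution {H : SimpleGraph (Option (Fin 5))}
    [DecidableRel H.Adj] (hH : ∀ i j, H.Adj (some i) (some j) ↔ C5.Adj i j)
    {a : Option (Fin 5) → ℝ} (Z : Submodule ℝ (Option (Fin 5) → ℝ))
    (hZ : ∀ y ∈ Z, H.IsLocalSolution a y) : finrank ℝ Z ≤ 2 := by
  by_contra! h3
  let ev : Z →ₗ[ℝ] Fin 3 → ℝ := (LinearMap.funLeft ℝ ℝ ![some 0, some 1, none]).comp Z.subtype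
  have hinj : Function.Injective ev := by
    rw [← LinearMap.ker_eq_bot, LinearMap.ker_eq_bot']
    intro z hz
    exact Subtype.ext ((hZ z z.2).eq_zero_of_apply_eq_zero hH (congrFun hz 0) (congrFun hz 1)
      (congrFun hz 2))
  have hrank : finrank ℝ Z = finrank ℝ (Fin 3 → ℝ) :=
    le_antisymm (LinearMap.finrank_le_finrank_of_injective hinj)
      (by rw [finrank_fin_fun]; exact h3)
  have hsurj := (LinearMap.injective_iff_surjective_of_finrank_eq_finrank hrank).mp hinj
  obtain ⟨P, hP⟩ := hsurj ![1, 0, 0]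
  obtain ⟨Q, hQ⟩ := hsurj ![0, 1, 0]
  obtain ⟨R, hR⟩ := hsurj ![0, 0, 1]
  exact (hZ P P.2).false_of_three_solutions hH (congrFun hP 0) (congrFun hP 1) (congrFun hP 2)
    (hZ Q Q.2) (congrFun hQ 0) (congrFun hQ 1) (congrFun hQ 2)
    (hZ R R.2) (congrFun hR 0) (congrFun hR 1) (congrFun hR 2)

end SimpleGraph

open SimpleGraph

/-- Let `n ≥ 6` and let `G` be a connected simple graph on `n` vertices having a
Laplacian eigenvalue of multiplicity `n − 3`. Then `G` contains no induced subgraph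
isomorphic to the cycle `C₅` on five vertices. -/
theorem no_induced_C5_of_laplacian_multiplicity
    (n : ℕ) (hn : 6 ≤ n)
    (G : SimpleGraph (Fin n)) [DecidableRel G.Adj] (hconn : G.Connected)
    (hmult : ∃ α : ℝ, ((G.lapMatrix ℝ).charpoly.rootMultiplicity α) = n - 3) :
    ¬ ∃ f : Fin 5 → Fin n, Function.Injective f ∧
        ∀ i j, G.Adj (f i) (f j) ↔ C5.Adj i j := by
  rintro ⟨f, hf, hadj⟩
  obtain ⟨α, hα⟩ := hmult
  have hα0 : α ≠ 0 := by
    rintro rfl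
    rw [G.rootMultiplicity_zero_charpoly_lapMatrix hconn] at hα
    omega
  obtain ⟨w, hw⟩ : ∃ w, w ∉ Set.range f := by
    by_contra! h
    have := Fintype.card_le_of_surjective f h
    simp only [Fintype.card_fin] at this
    omega
  let g : Option (Fin 5) ↪ Fin n := Function.Embedding.optionElim ⟨f, hf⟩ w hw
  let E := Function.ExtendByZero.linearMap ℝ g
  let W := End.eigenspace (toLin' (G.lapMatrix ℝ)) α
  have hdim := Submodule.finrank_add_le_finrank_comap_add E W
  rw [(G.isHermitian_lapMatrix ℝ).finrank_eigenspace_toLin', hα] at hdim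
  simp only [finrank_fintype_fun_eq_card, Fintype.card_option, Fintype.card_fin] at hdim
  have hsmall := finrank_le_two_of_forall_isLocalSolution (H := G.comap g) (fun i j => hadj i j)
    (W.comap E) fun y hy => G.isLocalSolution_comap g.injective hα0
      (End.mem_eigenspace_iff.mp (Submodule.mem_comap.mp hy))
  omega
end
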